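/- arXiv:1903.01428 — 5 statements merged into one kernel-verified Lean document; each statement's English description precedes it below -/
import Mathlib

section
/- For every real x and every h > 0, SIR1(x,h) = SIR2(x,h) if and only if p_t·(h²)² + B(x)·h² + C(x) = 0, where B(x) = p_t·(X−x)² + p_t·(D−x)² − p_u·κ·(D−X)² + Y²·(p_t − p_u·κ) and C(x) = p_t·(D−x)²·((X−x)² + Y²) − p_u·κ·x²·(Y² + (D−X)²). Moreover, if B(x)² − 4·p_t·C(x) ≥ 0, this holds if and only if h² = Λ⁺(x) or h² = Λ⁻(x), where Λ^{±}(x) = (−B(x) ± sqrt(B(x)² − 4·p_t·C(x)))/(2·p_t). -/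
/-- SIR at the UAV located at (x,0,h). -/
noncomputable def SIR1 (pt pM X Y x h : ℝ) : ℝ :=
  pt * ((x - X) ^ 2 + Y ^ 2 + h ^ 2) / (pM * (x ^ 2 + h ^ 2))

/-- SIR at the Rx when the UAV is located at (x,0,h). -/
noncomputable def SIR2 (pu κ pM D X Y x h : ℝ) : ℝ :=
  pu * κ * (Y ^ 2 + (D - X) ^ 2) / (pM * ((D - x) ^ 2 + h ^ 2))

/-- Coefficient B(x) of the quadratic in h². -/
noncomputable def Bcoef (pt pu κ D X Y x : ℝ) : ℝ :=
  pt * (X - x) ^ 2 + pt * (D - x) ^ 2 - pu * κ * (D - X) ^ 2 + Y ^ 2 * (pt - pu * κ)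

/-- Coefficient C(x) of the quadratic in h². -/
noncomputable def Ccoef (pt pu κ D X Y x : ℝ) : ℝ :=
  pt * (D - x) ^ 2 * ((X - x) ^ 2 + Y ^ 2) - pu * κ * x ^ 2 * (Y ^ 2 + (D - X) ^ 2)

/-- Λ^{±}(x), given via sign = +1 or -1. -/
noncomputable def Lam (pt pu κ D X Y sign x : ℝ) : ℝ :=
  (-(Bcoef pt pu κ D X Y x) +
    sign * Real.sqrt ((Bcoef pt pu κ D X Y x) ^ 2 - 4 * pt * Ccoef pt pu κ D X Y x)) / (2 * pt)

theorem quadratic_eq_zero_iff_of_discrim_nonneg {a b c : ℝ} (ha : a ≠ 0)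
    (hΔ : 0 ≤ discrim a b c) (t : ℝ) :
    a * t ^ 2 + b * t + c = 0 ↔
      t = (-b + √(discrim a b c)) / (2 * a) ∨ t = (-b - √(discrim a b c)) / (2 * a) := by
  rw [sq t]
  exact quadratic_eq_zero_iff ha (Real.mul_self_sqrt hΔ).symm t

theorem cross_mul_SIR_eq (pt pu κ pM D X Y x h : ℝ) :
    pt * ((x - X) ^ 2 + Y ^ 2 + h ^ 2) * (pM * ((D - x) ^ 2 + h ^ 2)) -
        pu * κ * (Y ^ 2 + (D - X) ^ 2) * (pM * (x ^ 2 + h ^ 2)) =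
      pM * (pt * (h ^ 2) ^ 2 + Bcoef pt pu κ D X Y x * h ^ 2 + Ccoef pt pu κ D X Y x) := by
  simp only [Bcoef, Ccoef]
  ring

theorem SIR1_eq_SIR2_iff {pt pu κ pM D X Y x h : ℝ} (hpM : pM ≠ 0) (hh : h ≠ 0) :
    SIR1 pt pM X Y x h = SIR2 pu κ pM D X Y x h ↔
      pt * (h ^ 2) ^ 2 + Bcoef pt pu κ D X Y x * h ^ 2 + Ccoef pt pu κ D X Y x = 0 := by
  have hden₁ : pM * (x ^ 2 + h ^ 2) ≠ 0 := mul_ne_zero hpM (by positivity)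
  have hden₂ : pM * ((D - x) ^ 2 + h ^ 2) ≠ 0 := mul_ne_zero hpM (by positivity)
  rw [SIR1, SIR2, div_eq_div_iff hden₁ hden₂, ← sub_eq_zero, cross_mul_SIR_eq,
    mul_eq_zero, or_iff_right hpM]

theorem stmt0_general (D X Y pt pu pM κ : ℝ)
    (hpt : 0 < pt) (hpM : 0 < pM) :
    ∀ x h : ℝ, 0 < h →
      ((SIR1 pt pM X Y x h = SIR2 pu κ pM D X Y x h ↔
        pt * (h ^ 2) ^ 2 + Bcoef pt pu κ D X Y x * h ^ 2 + Ccoef pt pu κ D X Y x = 0) ∧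
      ((Bcoef pt pu κ D X Y x) ^ 2 - 4 * pt * Ccoef pt pu κ D X Y x ≥ 0 →
        (SIR1 pt pM X Y x h = SIR2 pu κ pM D X Y x h ↔
          h ^ 2 = Lam pt pu κ D X Y 1 x ∨ h ^ 2 = Lam pt pu κ D X Y (-1) x))) := by
  intro x h hh
  refine ⟨SIR1_eq_SIR2_iff hpM.ne' hh.ne', fun hΔ => ?_⟩
  rw [SIR1_eq_SIR2_iff hpM.ne' hh.ne', quadratic_eq_zero_iff_of_discrim_nonneg hpt.ne' hΔ]
  simp only [Lam, discrim, one_mul, neg_one_mul, ← sub_eq_add_neg]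

theorem stmt0 (D X Y pt pu pM κ : ℝ) (hD : 0 < D) (hX0 : 0 ≤ X) (hXD : X ≤ D)
    (hpt : 0 < pt) (hpu : 0 < pu) (hpM : 0 < pM) (hκ : 0 < κ) :
    ∀ x h : ℝ, 0 < h →
      ((SIR1 pt pM X Y x h = SIR2 pu κ pM D X Y x h ↔
        pt * (h ^ 2) ^ 2 + Bcoef pt pu κ D X Y x * h ^ 2 + Ccoef pt pu κ D X Y x = 0) ∧
      ((Bcoef pt pu κ D X Y x) ^ 2 - 4 * pt * Ccoef pt pu κ D X Y x ≥ 0 →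
        (SIR1 pt pM X Y x h = SIR2 pu κ pM D X Y x h ↔
          h ^ 2 = Lam pt pu κ D X Y 1 x ∨ h ^ 2 = Lam pt pu κ D X Y (-1) x))) :=
  stmt0_general D X Y pt pu pM κ hpt hpM
end

section
/- Let 0 < h_min ≤ h_max and assume (X² + Y²)·D ≥ h_max²·(D − 2·X). Then for every x ∈ [0,D] and every h ∈ [h_min, h_max], SIR1(x,h) ≤ p_t·(X² + Y² + h_min²)/(p_M·h_min²), and equality holds at (x,h) = (0, h_min); that is, the maximum of SIR1 over [0,D] × [h_min,h_max] equals p_t·(X² + Y² + h_min²)/(p_M·h_min²). -/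
theorem stmt3 (D X Y pt pu pM hmin hmax : ℝ) (hD : 0 < D) (hX0 : 0 ≤ X) (hXD : X ≤ D)
    (hpt : 0 < pt) (hpu : 0 < pu) (hpM : 0 < pM)
    (hhmin : 0 < hmin) (hhm : hmin ≤ hmax)
    (hcond : (X ^ 2 + Y ^ 2) * D ≥ hmax ^ 2 * (D - 2 * X)) :
    (∀ x ∈ Set.Icc (0 : ℝ) D, ∀ h ∈ Set.Icc hmin hmax,
      SIR1 pt pM X Y x h ≤ pt * (X ^ 2 + Y ^ 2 + hmin ^ 2) / (pM * hmin ^ 2)) ∧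
    SIR1 pt pM X Y 0 hmin = pt * (X ^ 2 + Y ^ 2 + hmin ^ 2) / (pM * hmin ^ 2) := by
  constructor
  · rintro x ⟨hx0, hxD⟩ h ⟨hh1, hh2⟩
    have hh0 : 0 < h := lt_of_lt_of_le hhmin hh1
    have hden : 0 < pM * (x ^ 2 + h ^ 2) := by positivity
    have hden2 : 0 < pM * hmin ^ 2 := by positivity
    rw [SIR1, div_le_div_iff₀ hden hden2]
    have key : 0 ≤ (X ^ 2 + Y ^ 2) * (x ^ 2 + h ^ 2 - hmin ^ 2) + 2 * X * x * hmin ^ 2 := by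
      have h1 : 0 ≤ x ^ 2 + h ^ 2 - hmin ^ 2 := by nlinarith [sq_nonneg x]
      have h2 : 0 ≤ 2 * X * x * hmin ^ 2 := by positivity
      nlinarith [mul_nonneg (add_nonneg (sq_nonneg X) (sq_nonneg Y)) h1]
    nlinarith [mul_nonneg (mul_pos hpt hpM).le key]
  · simp [SIR1]
end

section
/- (Theorem 3, Case 1.) Let 0 < h_min ≤ h_max and assume X > 0. If SIR1(x,h) ≠ SIR2(x,h) for every (x,h) ∈ [0,D] × [h_min,h_max] (the locus has no feasible solution), then for every (x,h) ∈ [0,D] × [h_min,h_max], SIR_S(x,h) ≤ max{SIR_S(0,h_min), SIR_S(0,h_max), SIR_S(D,h_min), SIR_S(D,h_max)}; that is, the optimal UAV position is at one of the four boundary corners. -/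
/-- SIR of the system. -/
noncomputable def SIRS (pt pu κ pM D X Y x h : ℝ) : ℝ :=
  min (SIR1 pt pM X Y x h) (SIR2 pu κ pM D X Y x h)

theorem stmt14 (D X Y pt pu pM κ hmin hmax : ℝ) (hD : 0 < D) (hX0 : 0 ≤ X) (hXD : X ≤ D)
    (hpt : 0 < pt) (hpu : 0 < pu) (hpM : 0 < pM) (hκ : 0 < κ)
    (hhmin : 0 < hmin) (hhm : hmin ≤ hmax) (hX : 0 < X)
    (hnocross : ∀ x ∈ Set.Icc (0 : ℝ) D, ∀ h ∈ Set.Icc hmin hmax,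
      SIR1 pt pM X Y x h ≠ SIR2 pu κ pM D X Y x h) :
    ∀ x ∈ Set.Icc (0 : ℝ) D, ∀ h ∈ Set.Icc hmin hmax,
      SIRS pt pu κ pM D X Y x h ≤
        max (max (SIRS pt pu κ pM D X Y 0 hmin) (SIRS pt pu κ pM D X Y 0 hmax))
          (max (SIRS pt pu κ pM D X Y D hmin) (SIRS pt pu κ pM D X Y D hmax)) := by
  intro x hx h hh
  obtain ⟨hx0, hxD⟩ := hx
  obtain ⟨hh1, hh2⟩ := hh
  have hmem0 : (0:ℝ) ∈ Set.Icc (0:ℝ) D := ⟨le_refl _, hD.le⟩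
  have hmemD : D ∈ Set.Icc (0:ℝ) D := ⟨hD.le, le_refl _⟩
  have hmemh : hmin ∈ Set.Icc hmin hmax := ⟨le_refl _, hhm⟩
  -- key bound 1 : SIR1 x h ≤ SIR1 0 hmin
  have hhpos : 0 < h := lt_of_lt_of_le hhmin hh1
  have key1 : SIR1 pt pM X Y x h ≤ SIR1 pt pM X Y 0 hmin := by
    unfold SIR1
    rw [div_le_div_iff₀ (by positivity) (by positivity)]
    have hh' : hmin ^ 2 ≤ h ^ 2 := by nlinarith
    have core : ((x - X) ^ 2 + Y ^ 2 + h ^ 2) * (0 ^ 2 + hmin ^ 2) ≤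
        ((0 - X) ^ 2 + Y ^ 2 + hmin ^ 2) * (x ^ 2 + h ^ 2) := by
      nlinarith [mul_nonneg (add_nonneg (sq_nonneg X) (sq_nonneg Y))
          (by nlinarith [sq_nonneg x] : (0:ℝ) ≤ x ^ 2 + h ^ 2 - hmin ^ 2),
        mul_nonneg (mul_nonneg hx0 hX.le) (sq_nonneg hmin)]
    nlinarith [mul_le_mul_of_nonneg_left core (mul_pos hpt hpM).le]
  -- key bound 2 : SIR2 x h ≤ SIR2 D hmin
  have key2 : SIR2 pu κ pM D X Y x h ≤ SIR2 pu κ pM D X Y D hmin := by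
    unfold SIR2
    apply div_le_div_of_nonneg_left (by positivity) (by positivity)
    have hh' : hmin ^ 2 ≤ h ^ 2 := by nlinarith
    nlinarith [sq_nonneg (D - x)]
  have hne0 := hnocross 0 hmem0 hmin hmemh
  have hneD := hnocross D hmemD hmin hmemh
  rcases lt_or_gt_of_ne hne0 with h0lt | h0gt
  · -- SIR1 < SIR2 at (0,hmin): SIRS(0,hmin) = SIR1(0,hmin)
    have : SIRS pt pu κ pM D X Y 0 hmin = SIR1 pt pM X Y 0 hmin :=
      min_eq_left h0lt.le
    calc SIRS pt pu κ pM D X Y x h ≤ SIR1 pt pM X Y x h := min_le_left _ _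
      _ ≤ SIR1 pt pM X Y 0 hmin := key1
      _ = SIRS pt pu κ pM D X Y 0 hmin := this.symm
      _ ≤ _ := le_max_of_le_left (le_max_left _ _)
  · rcases lt_or_gt_of_ne hneD with hDlt | hDgt
    · -- SIR1 > SIR2 at (0,hmin) but SIR1 < SIR2 at (D,hmin): IVT contradiction
      exfalso
      set f : ℝ → ℝ := fun t => SIR1 pt pM X Y t hmin - SIR2 pu κ pM D X Y t hmin with hf
      have hcont : ContinuousOn f (Set.Icc 0 D) := by
        apply ContinuousOn.sub
        · apply ContinuousOn.div (by fun_prop) (by fun_prop)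
          intro t _; positivity
        · apply ContinuousOn.div (by fun_prop) (by fun_prop)
          intro t _; positivity
      have hfD : f D < 0 := sub_neg.mpr hDlt
      have hf0 : 0 < f 0 := sub_pos.mpr h0gt
      have := intermediate_value_Icc' hD.le hcont (Set.mem_Icc.mpr ⟨hfD.le, hf0.le⟩)
      obtain ⟨c, hc, hfc⟩ := this
      exact hnocross c hc hmin hmemh (sub_eq_zero.mp hfc)
    · -- SIR2 < SIR1 at (D,hmin): SIRS(D,hmin) = SIR2(D,hmin)
      have : SIRS pt pu κ pM D X Y D hmin = SIR2 pu κ pM D X Y D hmin :=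
        min_eq_right hDgt.le
      calc SIRS pt pu κ pM D X Y x h ≤ SIR2 pu κ pM D X Y x h := min_le_right _ _
        _ ≤ SIR2 pu κ pM D X Y D hmin := key2
        _ = SIRS pt pu κ pM D X Y D hmin := this.symm
        _ ≤ _ := le_max_of_le_right (le_max_left _ _)
end

section
/- (Theorem 3, Case 2, first claim.) Let 0 < h_min ≤ h_max. If SIR2(D,h_min) ≤ SIR1(D,h_min), then for every (x,h) ∈ [0,D] × [h_min,h_max], SIR_S(x,h) ≤ SIR_S(D,h_min); that is, the optimal UAV position is (x*,h*) = (D,h_min). -/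
theorem stmt15 (D X Y pt pu pM κ hmin hmax : ℝ) (hD : 0 < D) (hX0 : 0 ≤ X) (hXD : X ≤ D)
    (hpt : 0 < pt) (hpu : 0 < pu) (hpM : 0 < pM) (hκ : 0 < κ)
    (hhmin : 0 < hmin) (hhm : hmin ≤ hmax)
    (hcond : SIR2 pu κ pM D X Y D hmin ≤ SIR1 pt pM X Y D hmin) :
    ∀ x ∈ Set.Icc (0 : ℝ) D, ∀ h ∈ Set.Icc hmin hmax,
      SIRS pt pu κ pM D X Y x h ≤ SIRS pt pu κ pM D X Y D hmin := by
  intro x hx h hh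
  have hS : SIRS pt pu κ pM D X Y D hmin = SIR2 pu κ pM D X Y D hmin :=
    min_eq_right hcond
  rw [hS, SIRS]
  refine le_trans (min_le_right _ _) ?_
  unfold SIR2
  have hnum : (0:ℝ) ≤ pu * κ * (Y ^ 2 + (D - X) ^ 2) := by positivity
  have hden : (0:ℝ) < pM * ((D - D) ^ 2 + hmin ^ 2) := by positivity
  apply div_le_div_of_nonneg_left hnum hden
  have h1 : hmin ≤ h := hh.1
  have h2 : (D - D) ^ 2 + hmin ^ 2 ≤ (D - x) ^ 2 + h ^ 2 := by
    nlinarith [sq_nonneg (D - x)]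
  exact mul_le_mul_of_nonneg_left h2 hpM.le
end

section
/- (Equations (14)–(15): stationary point of the inter-UAV SIR.) Fix h > 0 and the transmitting UAV's horizontal position s, and assume a := X − s > 0. Set Φ = (h² + Y² + a²)/a. Then on d > 0 the derivative of the map d ↦ SIR_link(s,d,h) is nonnegative if d ≥ Φ and strictly negative if 0 < d < Φ; in particular the derivative vanishes at d = Φ. -/
/-- SIR at the receiving UAV of an inter-UAV hop: transmitting UAV at horizontal
position s, receiving UAV at horizontal position s + d, common altitude h. -/
noncomputable def SIRlink (pu pM μL ηN X Y s d h : ℝ) : ℝ :=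
  pu * ηN * ((X - s - d) ^ 2 + Y ^ 2 + h ^ 2) / (pM * μL * d ^ 2)

section

variable {pu pM μL ηN X Y s d h : ℝ}

theorem hasDerivAt_SIRlink (hpM : pM ≠ 0) (hμL : μL ≠ 0) (hd : d ≠ 0) :
    HasDerivAt (fun t => SIRlink pu pM μL ηN X Y s t h)
      (2 * pu * ηN * ((X - s) * d - ((X - s) ^ 2 + Y ^ 2 + h ^ 2)) / (pM * μL * d ^ 3)) d := by
  have hnum : HasDerivAt (fun t => pu * ηN * ((X - s - t) ^ 2 + Y ^ 2 + h ^ 2))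
      (pu * ηN * (2 * (X - s - d) ^ 1 * (0 - 1))) d :=
    ((((hasDerivAt_const d (X - s)).sub (hasDerivAt_id d)).pow 2).add_const _
      |>.add_const _).const_mul _
  have hden : HasDerivAt (fun t => pM * μL * t ^ 2) (pM * μL * (2 * d ^ 1)) d :=
    (hasDerivAt_pow 2 d).const_mul _
  refine (hnum.div hden (by positivity)).congr_deriv ?_
  field_simp
  ring

theorem deriv_SIRlink_nonneg_iff (hpu : 0 < pu) (hpM : 0 < pM) (hμL : 0 < μL)
    (hηN : 0 < ηN) (ha : 0 < X - s) (hd : 0 < d) :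
    0 ≤ deriv (fun t => SIRlink pu pM μL ηN X Y s t h) d ↔
      (h ^ 2 + Y ^ 2 + (X - s) ^ 2) / (X - s) ≤ d := by
  rw [(hasDerivAt_SIRlink hpM.ne' hμL.ne' hd.ne').deriv, le_div_iff₀ (by positivity), zero_mul,
    mul_nonneg_iff_of_pos_left (by positivity), sub_nonneg, div_le_iff₀ ha]
  constructor <;> intro hle <;> linarith

end

theorem stmt19_general (X Y pu pM μL ηN h s : ℝ)
    (hpu : 0 < pu) (hpM : 0 < pM) (hμL : 0 < μL) (hηN : 0 < ηN)
    (ha : 0 < X - s) :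
    (∀ d : ℝ, 0 < d →
      (d ≥ (h ^ 2 + Y ^ 2 + (X - s) ^ 2) / (X - s) →
        0 ≤ deriv (fun t => SIRlink pu pM μL ηN X Y s t h) d) ∧
      (d < (h ^ 2 + Y ^ 2 + (X - s) ^ 2) / (X - s) →
        deriv (fun t => SIRlink pu pM μL ηN X Y s t h) d < 0)) ∧
    deriv (fun t => SIRlink pu pM μL ηN X Y s t h)
      ((h ^ 2 + Y ^ 2 + (X - s) ^ 2) / (X - s)) = 0 := by
  refine ⟨fun d hd => ?_, ?_⟩
  · have hsign := deriv_SIRlink_nonneg_iff (Y := Y) (h := h) hpu hpM hμL hηN ha hd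
    exact ⟨hsign.2, fun hlt => not_le.1 (mt hsign.1 (not_le.2 hlt))⟩
  · have hΦ : 0 < (h ^ 2 + Y ^ 2 + (X - s) ^ 2) / (X - s) := by positivity
    rw [(hasDerivAt_SIRlink hpM.ne' hμL.ne' hΦ.ne').deriv, mul_div_cancel₀ _ ha.ne']
    ring

theorem stmt19 (X Y pu pM μL ηN h s : ℝ)
    (hpu : 0 < pu) (hpM : 0 < pM) (hμL : 0 < μL) (hηN : 0 < ηN)
    (hh : 0 < h) (ha : 0 < X - s) :
    (∀ d : ℝ, 0 < d →
      (d ≥ (h ^ 2 + Y ^ 2 + (X - s) ^ 2) / (X - s) →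
        0 ≤ deriv (fun t => SIRlink pu pM μL ηN X Y s t h) d) ∧
      (d < (h ^ 2 + Y ^ 2 + (X - s) ^ 2) / (X - s) →
        deriv (fun t => SIRlink pu pM μL ηN X Y s t h) d < 0)) ∧
    deriv (fun t => SIRlink pu pM μL ηN X Y s t h)
      ((h ^ 2 + Y ^ 2 + (X - s) ^ 2) / (X - s)) = 0 :=
  stmt19_general X Y pu pM μL ηN h s hpu hpM hμL hηN ha
end
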